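/- Let i = i₀i₁i₂⋯ be an interaction sequence and let I be a union of isolated intervals of i. Then I is isolated, and i − I is either the empty sequence or an interaction sequence. -/
import Mathlib


set_option linter.deprecated false

/-- `Vset i n` is the set `V(n)` associated to a pointer sequence `i`:
`V(0) = ∅`, `V(n+1) = {n} ∪ V(i n)`.  (The `min` is a harmless truncation making the
recursion well-founded; for a pointer sequence `i n ≤ n`, so `min (i n) n = i n`.) -/
def Vset (i : ℕ → ℕ) : ℕ → Finset ℕ
  | 0 => ∅
  | n + 1 => insert n (Vset i (min (i n) n))
  decreasing_by exact Nat.lt_succ_of_le (min_le_right _ _)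

/-- An (infinite) pointer sequence: `i 0 = 0` and `i (n+1) < n+1`. -/
def IsPointerSeq (i : ℕ → ℕ) : Prop := i 0 = 0 ∧ ∀ n, i (n + 1) < n + 1

/-- An (infinite) interaction sequence: a pointer sequence with `i (n+1) ∈ V(n+1)`. -/
def IsInteractionSeq (i : ℕ → ℕ) : Prop :=
  IsPointerSeq i ∧ ∀ n, i (n + 1) ∈ Vset i (n + 1)

/-- `W(0) = ∅`, `W(n+1) = {n, i n} ∪ W(i n)`. -/
def Wset (i : ℕ → ℕ) : ℕ → Finset ℕ
  | 0 => ∅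
  | n + 1 => insert n (insert (i n) (Wset i (min (i n) n)))
  decreasing_by exact Nat.lt_succ_of_le (min_le_right _ _)

/-- Length of the pointer chain `n, i n, i (i n), …, 0` (stopping at `0`). -/
def chainLen (i : ℕ → ℕ) : ℕ → ℕ
  | 0 => 1
  | n + 1 => chainLen i (min (i (n + 1)) n) + 1
  decreasing_by exact Nat.lt_succ_of_le (min_le_right _ _)

/-- The interaction sequence `i` has depth at most `ν`: every pointer chain has length `≤ ν+1`. -/
def DepthAtMost (i : ℕ → ℕ) (ν : ℕ) : Prop := ∀ n, chainLen i n ≤ ν + 1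

/-- `I` is isolated for `i`: `i n ∈ I → n ∈ I`. -/
def Isolated (i : ℕ → ℕ) (I : Set ℕ) : Prop := ∀ n, i n ∈ I → n ∈ I

/-- Finite versions: conditions imposed only on indices `< n`. -/
def IsPointerSeqUpTo (n : ℕ) (i : ℕ → ℕ) : Prop :=
  (0 < n → i 0 = 0) ∧ ∀ m, m + 1 < n → i (m + 1) < m + 1

def IsInteractionSeqUpTo (n : ℕ) (i : ℕ → ℕ) : Prop :=
  IsPointerSeqUpTo n i ∧ ∀ m, m + 1 < n → i (m + 1) ∈ Vset i (m + 1)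

def IsolatedUpTo (n : ℕ) (i : ℕ → ℕ) (I : Set ℕ) : Prop :=
  ∀ m, m < n → i m ∈ I → m ∈ I

def DepthAtMostUpTo (n : ℕ) (i : ℕ → ℕ) (ν : ℕ) : Prop :=
  ∀ m, m < n → chainLen i m ≤ ν + 1

/-- An ordinal interaction sequence `(α₀,i₀)⋯(α_{n-1},i_{n-1}) αₙ`:
`pairs` lists `(α_k, i_k)` for `k < n`, and `last` is `αₙ`. -/
structure OIS where
  pairs : List (Ordinal.{0} × ℕ)
  last : Ordinal.{0}

namespace OIS

/-- The pointer `i_k` (junk for `k ≥ n`). -/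
def ptrAt (u : OIS) (k : ℕ) : ℕ := (u.pairs.getD k (0, 0)).2

/-- The ordinal `α_k`, for `k ≤ n` (`α_n` is `u.last`). -/
def ordAt (u : OIS) (k : ℕ) : Ordinal :=
  if k < u.pairs.length then (u.pairs.getD k (0, 0)).1 else u.last

/-- `u` is a genuine ordinal interaction sequence: the pointers form an interaction
sequence, and `α_{m+1} < α_{i_m}` for all `0 < m < n`. -/
def valid (u : OIS) : Prop :=
  IsInteractionSeqUpTo u.pairs.length u.ptrAt ∧
  ∀ m, 0 < m → m + 1 ≤ u.pairs.length → u.ordAt (m + 1) < u.ordAt (u.ptrAt m)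

/-- All ordinals of `u` are `< α`. -/
def below (u : OIS) (α : Ordinal) : Prop := ∀ k, k ≤ u.pairs.length → u.ordAt k < α

/-- `u` has depth at most `ν`. -/
def depthLE (u : OIS) (ν : ℕ) : Prop := DepthAtMostUpTo u.pairs.length u.ptrAt ν

/-- `u ⪯ v`. -/
def le (u v : OIS) : Prop :=
  u.pairs.length ≤ v.pairs.length ∧
  (∀ k, k < u.pairs.length → u.pairs.getD k (0, 0) = v.pairs.getD k (0, 0)) ∧
  v.ordAt u.pairs.length ≤ u.last

/-- `u ≺ v`. -/
def prec (u v : OIS) : Prop := u.le v ∧ u ≠ v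

/-- The prefix `(α₀,i₀)⋯(α_{m-1},i_{m-1}) α_m` of `u`, for `m ≤ n`. -/
def prefixAt (u : OIS) (m : ℕ) : OIS := ⟨u.pairs.take m, u.ordAt m⟩

end OIS

/-- Membership in the tree `T(ν, α)` of ordinal interaction sequences of depth at
most `ν` below `α`, rooted at the empty sequence (`none`). -/
def InTree (ν : ℕ) (α : Ordinal.{0}) : Option OIS → Prop
  | none => True
  | some u => u.valid ∧ u.depthLE ν ∧ u.below α

/-- `≺` extended to the root: the empty sequence strictly precedes everything. -/
def OptPrec : Option OIS → Option OIS → Prop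
  | none, some _ => True
  | some u, some v => u.prec v
  | _, _ => False

/-- The "descends in the tree `T(ν,α)`" relation (for computing heights/ranks). -/
def treeRel (ν : ℕ) (α : Ordinal.{0}) (x y : Option OIS) : Prop :=
  OptPrec y x ∧ InTree ν α x ∧ InTree ν α y

/-- `c_0(α) = α·2`, `c_{ν+1}(α) = 3 ^ c_ν(α)`. -/
noncomputable def cfun : ℕ → Ordinal.{0} → Ordinal.{0}
  | 0, α => α * 2
  | ν + 1, α => 3 ^ cfun ν α

theorem my_vset_succ {i : ℕ → ℕ} {n : ℕ} (h : i n ≤ n) :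
    Vset i (n+1) = insert n (Vset i (i n)) := by rw [Vset, min_eq_left h]

theorem my_vset_lt {i : ℕ → ℕ} : ∀ {n t : ℕ}, t ∈ Vset i n → t < n := by
  intro n
  induction n using Nat.strong_induction_on with
  | _ n ih =>
    intro t ht
    match n with
    | 0 => simp [Vset] at ht
    | u+1 =>
      rw [Vset] at ht
      rcases Finset.mem_insert.mp ht with h | h
      · omega
      · have := ih (min (i u) u) (Nat.lt_succ_of_le (min_le_right _ _)) h
        omega

theorem my_lemF {i : ℕ → ℕ} (hp : ∀ n, i n ≤ n) (s : ℕ)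
    (hiso : ∀ n, i s ≤ i n → i n ≤ s → (i s ≤ n ∧ n ≤ s)) :
    ∀ b t, t ∈ Vset i b → i s ≤ t → t ≤ s → s < b → i s ≤ i t := by
  intro b
  induction b using Nat.strong_induction_on with
  | _ b ih =>
    intro t ht h1 h2 h3
    match b with
    | 0 => simp [Vset] at ht
    | u+1 =>
      rw [my_vset_succ (hp u)] at ht
      rcases Finset.mem_insert.mp ht with h | h
      · have hus : t = s := by omega
        rw [h] at hus ⊢
        rw [hus]
      · have htlt : t < i u := my_vset_lt h
        by_cases hc : s < i u
        · exact ih (i u) (Nat.lt_succ_of_le (hp u)) t h h1 h2 hc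
        · push_neg at hc
          have h5 := hiso u (by omega) hc
          have hus : u = s := by omega
          rw [hus] at htlt
          omega

theorem my_lemG {i : ℕ → ℕ} (hp : ∀ n, i n ≤ n) (I : Set ℕ)
    (hint : ∀ t ∈ I, ∃ s, i s ≤ t ∧ t ≤ s ∧
      (∀ n, i s ≤ i n → i n ≤ s → (i s ≤ n ∧ n ≤ s)) ∧ (∀ x, i s ≤ x → x ≤ s → x ∈ I))
    (a b : ℕ) (ha : a ∉ I) (hb : b ∉ I) (hbet : ∀ x, a < x → x < b → x ∈ I) :
    ∀ k, a < k → k ≤ b → Vset i k ⊆ Vset i b →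
      ∀ x, x ∉ I → (x ∈ Vset i k ↔ x ∈ Vset i (a+1)) := by
  intro k
  induction k using Nat.strong_induction_on with
  | _ k ih =>
    intro hak hkb hsub x hx
    match k with
    | 0 => omega
    | t+1 =>
      by_cases htI : t ∈ I
      · obtain ⟨s, hs1, hs2, hs3, hs4⟩ := hint t htI
        have hat : a < t := by
          rcases Nat.lt_or_ge a t with h | h
          · exact h
          · have : a = t := by omega
            exact absurd (this ▸ htI) ha
        have htb : t ∈ Vset i b :=
          hsub (by rw [my_vset_succ (hp t)]; exact Finset.mem_insert_self t _)
        have hsb : s < b := by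
          by_contra h
          push_neg at h
          exact hb (hs4 b (by omega) h)
        have has : a < i s := by
          by_contra h
          push_neg at h
          exact ha (hs4 a h (by omega))
        have hita : a < i t := by
          have := my_lemF hp s hs3 b t htb hs1 hs2 hsb
          omega
        have hsub' : Vset i (i t) ⊆ Vset i b := fun y hy =>
          hsub (by rw [my_vset_succ (hp t)]; exact Finset.mem_insert_of_mem hy)
        have hIH := ih (i t) (by have := hp t; omega) hita (by have := hp t; omega) hsub' x hx
        rw [my_vset_succ (hp t), Finset.mem_insert]
        constructor
        · rintro (rfl | h)
          · exact absurd htI hx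
          · exact hIH.mp h
        · intro h
          exact Or.inr (hIH.mpr h)
      · have hta : t = a := by
          by_contra h
          have h1 : a < t := by omega
          exact htI (hbet t h1 (by omega))
        rw [hta]

/-- If `I` is a union of isolated intervals of an interaction sequence `i`,
then `I` is isolated and `i − I` is either the empty sequence or an interaction sequence:
whenever `e` enumerates the complement of `I` in increasing order, the (unique) `j` with
`i (e n) = e (j n)` exists and is an interaction sequence. -/
theorem minus_isolated_union (i : ℕ → ℕ) (hi : IsInteractionSeq i)
    (M : Set (Set ℕ)) (hM : ∀ J ∈ M, (∃ m, J = Set.Icc (i m) m) ∧ Isolated i J)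
    (I : Set ℕ) (hI : I = ⋃₀ M) :
    Isolated i I ∧
    ∀ e : ℕ → ℕ, StrictMono e → Set.range e = Iᶜ →
      ∃ j : ℕ → ℕ, (∀ n, i (e n) = e (j n)) ∧ IsInteractionSeq j := by
  have hisoI : Isolated i I := by
    intro n hn
    rw [hI] at hn ⊢
    obtain ⟨J, hJM, hmem⟩ := hn
    exact ⟨J, hJM, (hM J hJM).2 n hmem⟩
  refine ⟨hisoI, ?_⟩
  intro e hE hre
  have hp : ∀ n, i n ≤ n := by
    intro n
    cases n with
    | zero => exact hi.1.1.le
    | succ m => exact (hi.1.2 m).le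
  have henotI : ∀ n, e n ∉ I := by
    intro n
    have h : e n ∈ Set.range e := ⟨n, rfl⟩
    rw [hre] at h
    exact h
  have hnotI_range : ∀ x, x ∉ I → ∃ y, e y = x := by
    intro x hx
    have h : x ∈ Set.range e := by rw [hre]; exact hx
    exact h
  have hie : ∀ n, i (e n) ∉ I := fun n h => henotI n (hisoI (e n) h)
  choose j hj using fun n => hnotI_range (i (e n)) (hie n)
  have hj0 : j 0 = 0 := by
    have h1 : e (j 0) ≤ e 0 := by rw [hj 0]; exact hp (e 0)
    have h2 : e 0 ≤ e (j 0) := hE.monotone (Nat.zero_le _)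
    exact hE.injective (le_antisymm h1 h2)
  have hjsucc : ∀ n, j (n+1) < n+1 := by
    intro n
    have hpos : 0 < e (n+1) := lt_of_le_of_lt (Nat.zero_le (e 0)) (hE (Nat.succ_pos n))
    obtain ⟨k, hk⟩ : ∃ k, e (n+1) = k+1 := ⟨e (n+1) - 1, by omega⟩
    have h1 : i (e (n+1)) < e (n+1) := by rw [hk]; exact hi.1.2 k
    have h2 : e (j (n+1)) < e (n+1) := by rw [hj (n+1)]; exact h1
    exact hE.lt_iff_lt.mp h2
  have hjp : ∀ n, j n ≤ n := by
    intro n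
    cases n with
    | zero => exact hj0.le
    | succ m => exact (hjsucc m).le
  have hint : ∀ t ∈ I, ∃ s, i s ≤ t ∧ t ≤ s ∧
      (∀ n, i s ≤ i n → i n ≤ s → (i s ≤ n ∧ n ≤ s)) ∧ (∀ x, i s ≤ x → x ≤ s → x ∈ I) := by
    intro t ht
    rw [hI] at ht
    obtain ⟨J, hJM, htJ⟩ := ht
    obtain ⟨⟨s, hJeq⟩, hJiso⟩ := hM J hJM
    rw [hJeq, Set.mem_Icc] at htJ
    refine ⟨s, htJ.1, htJ.2, ?_, ?_⟩
    · intro n h1 h2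
      have h := hJiso n (by rw [hJeq]; exact Set.mem_Icc.mpr ⟨h1, h2⟩)
      rw [hJeq, Set.mem_Icc] at h
      exact h
    · intro x h1 h2
      rw [hI]
      exact ⟨J, hJM, by rw [hJeq]; exact Set.mem_Icc.mpr ⟨h1, h2⟩⟩
  have lemH : ∀ m x, x ∉ I → (x ∈ Vset i (e m) ↔ ∃ y ∈ Vset j m, e y = x) := by
    intro m
    induction m using Nat.strong_induction_on with
    | _ m ih =>
      intro x hx
      match m with
      | 0 =>
        constructor
        · intro hmem
          have hxlt : x < e 0 := my_vset_lt hmem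
          obtain ⟨y, hy⟩ := hnotI_range x hx
          have h : e 0 ≤ e y := hE.monotone (Nat.zero_le y)
          omega
        · rintro ⟨y, hy, -⟩
          simp [Vset] at hy
      | m'+1 =>
        have hbet : ∀ z, e m' < z → z < e (m'+1) → z ∈ I := by
          intro z h1 h2
          by_contra hz
          obtain ⟨w, hw⟩ := hnotI_range z hz
          rw [← hw] at h1 h2
          have hw1 : m' < w := hE.lt_iff_lt.mp h1
          have hw2 : w < m'+1 := hE.lt_iff_lt.mp h2
          omega
        have hG := my_lemG hp I hint (e m') (e (m'+1)) (henotI m') (henotI (m'+1)) hbet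
          (e (m'+1)) (hE (Nat.lt_succ_self m')) le_rfl (fun y hy => hy) x hx
        rw [hG, my_vset_succ (hp (e m')), ← hj m', Finset.mem_insert]
        constructor
        · rintro (rfl | hmem)
          · exact ⟨m', by rw [my_vset_succ (hjp m')]; exact Finset.mem_insert_self m' _, rfl⟩
          · obtain ⟨y, hy1, hy2⟩ := (ih (j m') (Nat.lt_succ_of_le (hjp m')) x hx).mp hmem
            exact ⟨y, by rw [my_vset_succ (hjp m')]; exact Finset.mem_insert_of_mem hy1, hy2⟩
        · rintro ⟨y, hy1, hy2⟩
          rw [my_vset_succ (hjp m')] at hy1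
          rcases Finset.mem_insert.mp hy1 with rfl | hy1
          · exact Or.inl hy2.symm
          · exact Or.inr ((ih (j m') (Nat.lt_succ_of_le (hjp m')) x hx).mpr ⟨y, hy1, hy2⟩)
  refine ⟨j, fun n => (hj n).symm, ⟨hj0, hjsucc⟩, ?_⟩
  intro n
  have hpos : 0 < e (n+1) := lt_of_le_of_lt (Nat.zero_le (e 0)) (hE (Nat.succ_pos n))
  obtain ⟨k, hk⟩ : ∃ k, e (n+1) = k+1 := ⟨e (n+1) - 1, by omega⟩
  have h1 : i (e (n+1)) ∈ Vset i (e (n+1)) := by rw [hk]; exact hi.2 k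
  obtain ⟨y, hy1, hy2⟩ := (lemH (n+1) (i (e (n+1))) (hie (n+1))).mp h1
  have hyj : y = j (n+1) := hE.injective (by rw [hy2, hj])
  rwa [hyj] at hy1
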